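/- With C'_d = σ·Gr(2d), the d+1 vectors (1/√(2d))[1,…,1]^⊤ together with (1/√2)·e_j ⊗ [1, −1]^⊤ for j = 1, …, d form an orthonormal basis of ker(1 − C'_d). -/

import Mathlib

/-!
Write `C = σ (c J - 1)`, where `J` is the all-ones matrix and `σ` swaps the two coin states
at every site. Then `(C v)(s, j) = c ∑ v - v(s + 1, j)`, so with `c = 2 / (2d)` the vector
`v` is fixed by `C` exactly when `v(0, j) + v(1, j)` equals the same constant `c ∑ v` at every
site `j`. Such a `v` is its mean times `[1, …, 1]` plus a combination of the site-wise
antisymmetric vectors `e_j ⊗ [1, -1]`. These `d + 1` vectors are pairwise orthogonal, with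
squared norms `2d` and `2`.
-/

open Matrix

section FlipGrover

variable {R ι : Type*} [CommRing R] [DecidableEq ι]

/-- `e_j ⊗ [1, -1]`, with the coin index first. -/
def flipAntisymm (j : ι) : Fin 2 × ι → R :=
  fun p => if p.2 = j then (if p.1 = 0 then 1 else -1) else 0

theorem flipAntisymm_fst_add_one (j : ι) (p : Fin 2 × ι) :
    flipAntisymm (R := R) j (p.1 + 1, p.2) = -flipAntisymm j p := by
  obtain ⟨s, k⟩ := p
  fin_cases s <;> by_cases h : k = j <;> simp [flipAntisymm, h]

theorem star_flipAntisymm [StarRing R] (j : ι) :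
    star (flipAntisymm (R := R) j) = flipAntisymm j := by
  ext p
  simp [flipAntisymm, apply_ite star]

variable [Fintype ι]

def flipGrover (c : R) : Matrix (Fin 2 × ι) (Fin 2 × ι) R :=
  blockDiagonal (fun _ : ι => !![(0 : R), 1; 1, 0]) * (c • of (fun _ _ => (1 : R)) - 1)

theorem sum_flipAntisymm (j : ι) : ∑ p, flipAntisymm (R := R) j p = 0 := by
  simp [flipAntisymm, Fintype.sum_prod_type, Fin.sum_univ_two]

theorem flipAntisymm_dotProduct (i j : ι) :
    flipAntisymm (R := R) i ⬝ᵥ flipAntisymm j = if i = j then 2 else 0 := by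
  by_cases h : i = j
  · subst h
    norm_num [flipAntisymm, dotProduct, Fintype.sum_prod_type, Fin.sum_univ_two]
  · simp [flipAntisymm, dotProduct, Fintype.sum_prod_type, h, eq_comm]

omit [DecidableEq ι] [Fintype ι] in
theorem smul_of_one_sub_one_mulVec {κ : Type*} [Fintype κ] [DecidableEq κ] (c : R) (v : κ → R) :
    (c • of (fun _ _ => (1 : R)) - 1 : Matrix κ κ R) *ᵥ v = fun p => c * ∑ q, v q - v p := by
  rw [sub_mulVec, smul_mulVec, one_mulVec]
  ext p
  simp [mulVec, dotProduct, Finset.mul_sum]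

theorem blockDiagonal_swap_mulVec (w : Fin 2 × ι → R) :
    blockDiagonal (fun _ : ι => !![(0 : R), 1; 1, 0]) *ᵥ w = fun p => w (p.1 + 1, p.2) := by
  ext ⟨s, j⟩
  fin_cases s <;>
    simp [mulVec, dotProduct, Fintype.sum_prod_type, blockDiagonal_apply, Fin.sum_univ_two]

theorem flipGrover_mulVec (c : R) (v : Fin 2 × ι → R) :
    flipGrover c *ᵥ v = fun p => c * ∑ q, v q - v (p.1 + 1, p.2) := by
  rw [flipGrover, ← mulVec_mulVec, smul_of_one_sub_one_mulVec, blockDiagonal_swap_mulVec]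

theorem flipGrover_mulVec_one {c : R} (hc : c * (2 * Fintype.card ι) = 2) :
    flipGrover c *ᵥ (1 : Fin 2 × ι → R) = 1 := by
  ext p
  simp only [flipGrover_mulVec, Pi.one_apply, Finset.sum_const, Finset.card_univ,
    Fintype.card_prod, Fintype.card_fin, nsmul_eq_mul, mul_one]
  push_cast
  linear_combination hc

theorem flipGrover_mulVec_flipAntisymm (c : R) (j : ι) :
    flipGrover c *ᵥ flipAntisymm j = flipAntisymm j := by
  ext p
  simp [flipGrover_mulVec, sum_flipAntisymm, flipAntisymm_fst_add_one]

theorem eq_smul_one_add_sum_smul_flipAntisymm {v : Fin 2 × ι → R} {m : R}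
    (hv : ∀ j, v (0, j) + v (1, j) = 2 * m) :
    v = m • 1 + ∑ j, (v (0, j) - m) • flipAntisymm j := by
  ext ⟨s, k⟩
  fin_cases s
  · simp [flipAntisymm, Finset.sum_apply]
  · simp only [Fin.mk_one, Pi.add_apply, Pi.smul_apply, Pi.one_apply, smul_eq_mul, mul_one,
      Finset.sum_apply, flipAntisymm, one_ne_zero, if_false, if_true, mul_ite, mul_neg, mul_zero,
      Finset.sum_ite_eq, Finset.mem_univ]
    linear_combination hv k

end FlipGrover

noncomputable def posEigenbasis (d : ℕ) : Fin (d + 1) → (Fin 2 × Fin d → ℂ) :=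
  Fin.cases ((1 / (Real.sqrt (2 * d) : ℂ)) • 1) fun j => (1 / (Real.sqrt 2 : ℂ)) • flipAntisymm j

theorem eq_posEigenbasis {d : ℕ} {b : Fin (d + 1) → (Fin 2 × Fin d → ℂ)}
    (hb : ∀ (i : Fin (d + 1)) (s : Fin 2) (j : Fin d),
      b i (s, j) =
        if (i : ℕ) = 0 then (1 / (Real.sqrt (2 * d) : ℂ))
        else if (j : ℕ) + 1 = (i : ℕ) then
          (1 / (Real.sqrt 2 : ℂ)) * (if s = 0 then 1 else -1)
        else 0) :
    b = posEigenbasis d := by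
  ext i ⟨s, j⟩
  rw [hb]
  induction i using Fin.cases with
  | zero => simp [posEigenbasis]
  | succ i => simp [posEigenbasis, flipAntisymm, Fin.val_eq_val]

theorem star_inv_sqrt_mul_inv_sqrt {x : ℝ} (hx : 0 ≤ x) :
    star (1 / (Real.sqrt x : ℂ)) * (1 / (Real.sqrt x : ℂ)) = 1 / x := by
  rw [Complex.star_def, map_div₀, map_one, Complex.conj_ofReal, div_mul_div_comm, one_mul,
    ← Complex.ofReal_mul, Real.mul_self_sqrt hx]

theorem star_posEigenbasis_dotProduct {d : ℕ} (hd : d ≠ 0) (i i' : Fin (d + 1)) :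
    star (posEigenbasis d i) ⬝ᵥ posEigenbasis d i' = if i = i' then 1 else 0 := by
  have h2d : (0 : ℝ) ≤ 2 * d := by positivity
  induction i using Fin.cases <;> induction i' using Fin.cases <;>
    simp only [posEigenbasis, Fin.cases_zero, Fin.cases_succ, star_smul, smul_dotProduct,
      dotProduct_smul, smul_eq_mul, ← mul_assoc, mul_comm _ (star _), star_one,
      star_flipAntisymm, Fin.succ_inj, Fin.succ_ne_zero, (Fin.succ_ne_zero _).symm, if_false]
  case zero.zero =>
    rw [star_inv_sqrt_mul_inv_sqrt h2d, dotProduct_one, if_true]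
    simp only [Pi.one_apply, Finset.sum_const, Finset.card_univ, Fintype.card_prod,
      Fintype.card_fin, nsmul_eq_mul, mul_one]
    push_cast
    field_simp
  case zero.succ => rw [one_dotProduct, sum_flipAntisymm, mul_zero]
  case succ.zero => rw [dotProduct_one, sum_flipAntisymm, mul_zero]
  case succ.succ =>
    rw [star_inv_sqrt_mul_inv_sqrt zero_le_two, flipAntisymm_dotProduct]
    split_ifs <;> norm_num

theorem flipGrover_mulVec_posEigenbasis {d : ℕ} (hd : d ≠ 0) (i : Fin (d + 1)) :
    flipGrover (2 / (2 * d : ℂ)) *ᵥ posEigenbasis d i = posEigenbasis d i := by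
  induction i using Fin.cases with
  | zero =>
    rw [posEigenbasis, Fin.cases_zero, mulVec_smul, flipGrover_mulVec_one]
    simp only [Fintype.card_fin]
    field_simp
  | succ j => rw [posEigenbasis, Fin.cases_succ, mulVec_smul, flipGrover_mulVec_flipAntisymm]

theorem mem_span_posEigenbasis {d : ℕ} (hd : d ≠ 0) {x : Fin 2 × Fin d → ℂ}
    (hx : flipGrover (2 / (2 * d : ℂ)) *ᵥ x = x) :
    x ∈ Submodule.span ℂ (Set.range (posEigenbasis d)) := by
  have hsum : ∀ j, x (0, j) + x (1, j) = 2 * ((∑ q, x q) / (2 * d)) := by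
    intro j
    have hx0 := congrFun hx (0, j)
    simp only [flipGrover_mulVec, zero_add] at hx0
    linear_combination -hx0
  have hsqrt : ∀ {y : ℝ}, 0 < y → (1 / (Real.sqrt y : ℂ)) ≠ 0 := fun hy => by
    simpa using (Real.sqrt_pos.2 hy).ne'
  have hone : (1 : Fin 2 × Fin d → ℂ) ∈ Submodule.span ℂ (Set.range (posEigenbasis d)) :=
    (Submodule.smul_mem_iff _ (hsqrt (by positivity))).mp (Submodule.subset_span ⟨0, rfl⟩)
  have hanti : ∀ j, flipAntisymm j ∈ Submodule.span ℂ (Set.range (posEigenbasis d)) := fun j =>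
    (Submodule.smul_mem_iff _ (hsqrt two_pos)).mp (Submodule.subset_span ⟨j.succ, rfl⟩)
  rw [eq_smul_one_add_sum_smul_flipAntisymm hsum]
  exact add_mem (Submodule.smul_mem _ _ hone)
    (Submodule.sum_mem _ fun j _ => Submodule.smul_mem _ _ (hanti j))

/-- The `d+1` vectors `(1/√(2d))·[1,…,1]` and `(1/√2)·e_j ⊗ [1,-1]` (`j = 1,…,d`)
form an orthonormal basis of `ker(1 - C'_d)` where `C'_d = σ · Gr(2d)`. -/
theorem moving_shift_coin_pos_eigenbasis (d : ℕ) (hd : 2 ≤ d)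
    (σ Gr C' : Matrix (Fin 2 × Fin d) (Fin 2 × Fin d) ℂ)
    (hσ : σ = Matrix.blockDiagonal (fun _ : Fin d => !![(0 : ℂ), 1; 1, 0]))
    (hGr : Gr = ((2 : ℂ) / (2 * d)) • Matrix.of (fun _ _ => (1 : ℂ)) - 1)
    (hC' : C' = σ * Gr)
    (b : Fin (d + 1) → (Fin 2 × Fin d → ℂ))
    (hb : ∀ (i : Fin (d + 1)) (s : Fin 2) (j : Fin d),
      b i (s, j) =
        if (i : ℕ) = 0 then (1 / (Real.sqrt (2 * d) : ℂ))
        else if (j : ℕ) + 1 = (i : ℕ) then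
          (1 / (Real.sqrt 2 : ℂ)) * (if s = 0 then 1 else -1)
        else 0) :
    (∀ i i', ∑ x, star (b i x) * b i' x = if i = i' then 1 else 0) ∧
    (∀ i, C'.mulVec (b i) = b i) ∧
    (∀ x : Fin 2 × Fin d → ℂ, C'.mulVec x = x →
      x ∈ Submodule.span ℂ (Set.range b)) := by
  have hd0 : d ≠ 0 := by omega
  have hC : C' = flipGrover (2 / (2 * d : ℂ)) := by rw [hC', hσ, hGr, flipGrover]
  subst hC
  obtain rfl := eq_posEigenbasis hb
  exact ⟨star_posEigenbasis_dotProduct hd0, flipGrover_mulVec_posEigenbasis hd0,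
    fun _ => mem_span_posEigenbasis hd0⟩
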